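/- Suppose there exist simple 6-(23,7,5), 6-(23,8,40), 6-(23,9,200), 6-(23,10,700), 6-(23,11,1820), 6-(23,12,3640) and 6-(23,13,5720) designs. Then there exists a simple 6-(46, 13, 5483400) design (note 5483400 = 3515 × 1560). -/

import Mathlib

/-!
Take two copies of a 23-set. For `m ≤ 6` let the `m`-th layer be all `m`-subsets, and for
`7 ≤ m ≤ 13` the given `6-(23, m, λ_m)` design. The blocks are the unions `a ⊔ c` with `a` in the
`l`-th layer of the first copy and `c` in the `(13 - l)`-th layer of the second. A `6`-set meeting
the first copy in `i` points lies in `∑_l f(l, i) f(13 - l, 6 - i)` blocks, where `f(m, s)` is the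
number of blocks of the `m`-th layer through a fixed `s`-set. Since a `t-(v, k, λ)` design is an
`s`-design with `λ_s = λ C(v - s, t - s) / C(k - s, t - s)` for every `s ≤ t`, `f(m, s)` does not
depend on the `s`-set, and the sum is `5483400` for every `i`.
-/

/-- `SimpleDesignExists t v k lam` asserts the existence of a simple
`t-(v, k, lam)` design: a `v`-set `X` together with a set `B` of distinct
`k`-element subsets of `X` (blocks) such that every `t`-element subset of `X`
is contained in exactly `lam` blocks. -/
def SimpleDesignExists (t v k lam : ℕ) : Prop :=
  ∃ (X : Finset ℕ) (B : Finset (Finset ℕ)),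
    X.card = v ∧
    (∀ b ∈ B, b ⊆ X ∧ b.card = k) ∧
    (∀ T ⊆ X, T.card = t → (B.filter (fun b => T ⊆ b)).card = lam)

open Finset

section Design

variable {α β : Type*} [DecidableEq α] [DecidableEq β]

def IsDesign (t k lam : ℕ) (X : Finset α) (B : Finset (Finset α)) : Prop :=
  (∀ b ∈ B, b ⊆ X ∧ #b = k) ∧ ∀ T ⊆ X, #T = t → #{b ∈ B | T ⊆ b} = lam

theorem simpleDesignExists_iff {t v k lam : ℕ} :
    SimpleDesignExists t v k lam ↔
      ∃ (X : Finset ℕ) (B : Finset (Finset ℕ)), #X = v ∧ IsDesign t k lam X B :=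
  Iff.rfl

namespace IsDesign

variable {t k lam : ℕ} {X : Finset α} {B : Finset (Finset α)}

theorem map (h : IsDesign t k lam X B) (e : α ↪ β) :
    IsDesign t k lam (X.map e) (B.map (mapEmbedding e).toEmbedding) := by
  refine ⟨?_, fun T hT hTcard => ?_⟩
  · simp only [mem_map, RelEmbedding.coe_toEmbedding, mapEmbedding_apply]
    rintro _ ⟨b, hb, rfl⟩
    simpa using h.1 b hb
  · obtain ⟨T, hTX, rfl⟩ := subset_map_iff.1 hT
    rw [filter_map, card_map]
    simpa [Function.comp_def] using h.2 T hTX (by simpa using hTcard)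

theorem exists_of_card_eq (h : IsDesign t k lam X B) {Y : Finset α} (hXY : #X = #Y) :
    ∃ B' : Finset (Finset α), IsDesign t k lam Y B' := by
  obtain ⟨σ, rfl⟩ := Equiv.Perm.exists_map_finset_eq X Y hXY
  exact ⟨_, h.map σ.toEmbedding⟩

theorem card_filter_superset_mul_choose (h : IsDesign t k lam X B) {S : Finset α}
    (hSX : S ⊆ X) (hSt : #S ≤ t) :
    #{b ∈ B | S ⊆ b} * (k - #S).choose (t - #S) = lam * (#X - #S).choose (t - #S) := by
  -- double count the pairs `(b, U)` with `S ∪ U ⊆ b`, `U` a `(t - #S)`-subset of `X \ S`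
  have := card_mul_eq_card_mul (s := {b ∈ B | S ⊆ b}) (t := (X \ S).powersetCard (t - #S))
    (fun b U => U ⊆ b) (m := (k - #S).choose (t - #S)) (n := lam) ?_ ?_
  · rwa [card_powersetCard, card_sdiff_of_subset hSX, mul_comm _ lam] at this
  · intro b hb
    obtain ⟨hbB, hSb⟩ := mem_filter.1 hb
    obtain ⟨hbX, hbk⟩ := h.1 b hbB
    have : bipartiteAbove (fun b U => U ⊆ b) ((X \ S).powersetCard (t - #S)) b
        = (b \ S).powersetCard (t - #S) := by
      ext U
      simp only [bipartiteAbove, mem_filter, mem_powersetCard, subset_sdiff]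
      constructor
      · rintro ⟨⟨⟨-, hUS⟩, hUcard⟩, hUb⟩
        exact ⟨⟨hUb, hUS⟩, hUcard⟩
      · rintro ⟨⟨hUb, hUS⟩, hUcard⟩
        exact ⟨⟨⟨hUb.trans hbX, hUS⟩, hUcard⟩, hUb⟩
    rw [this, card_powersetCard, card_sdiff_of_subset hSb, hbk]
  · intro U hU
    obtain ⟨hUXS, hUcard⟩ := mem_powersetCard.1 hU
    obtain ⟨hUX, hUS⟩ := subset_sdiff.1 hUXS
    have : bipartiteBelow (fun b U => U ⊆ b) {b ∈ B | S ⊆ b} U = {b ∈ B | S ∪ U ⊆ b} := by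
      simp only [bipartiteBelow, filter_filter, union_subset_iff]
    rw [this]
    refine h.2 _ (union_subset hSX hUX) ?_
    rw [card_union_of_disjoint hUS.symm, hUcard]
    omega

end IsDesign

theorem isDesign_powersetCard (X : Finset α) (k : ℕ) : IsDesign k k 1 X (X.powersetCard k) := by
  refine ⟨fun b hb => mem_powersetCard.1 hb, fun T hTX hT => card_eq_one.2 ⟨T, ?_⟩⟩
  ext b
  simp only [mem_filter, mem_powersetCard, mem_singleton]
  constructor
  · rintro ⟨⟨-, hb⟩, hTb⟩
    exact (eq_of_subset_of_card_le hTb (hb.trans hT.symm).le).symm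
  · rintro rfl
    exact ⟨⟨hTX, hT⟩, subset_rfl⟩

theorem card_filter_powersetCard_superset {S X : Finset α} (hSX : S ⊆ X) (k : ℕ) :
    #{b ∈ X.powersetCard k | S ⊆ b} = if #S ≤ k then (#X - #S).choose (k - #S) else 0 := by
  split_ifs with hSk
  · simpa using (isDesign_powersetCard X k).card_filter_superset_mul_choose hSX hSk
  · rw [card_eq_zero, filter_eq_empty_iff]
    intro b hb hSb
    exact hSk ((card_le_card hSb).trans (mem_powersetCard.1 hb).2.le)

end Design

section DisjSum

variable {α β : Type*}

def disjSumFamily (A : Finset (Finset α)) (C : Finset (Finset β)) : Finset (Finset (α ⊕ β)) :=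
  (A ×ˢ C).map ⟨Function.uncurry disjSum, Injective2_disjSum.uncurry⟩

theorem mem_disjSumFamily {A : Finset (Finset α)} {C : Finset (Finset β)} {u : Finset (α ⊕ β)} :
    u ∈ disjSumFamily A C ↔ u.toLeft ∈ A ∧ u.toRight ∈ C := by
  simp [disjSumFamily, disjSum_eq_iff]

theorem card_filter_superset_disjSumFamily [DecidableEq α] [DecidableEq β]
    (A : Finset (Finset α)) (C : Finset (Finset β)) (T : Finset (α ⊕ β)) :
    #{u ∈ disjSumFamily A C | T ⊆ u} = #{a ∈ A | T.toLeft ⊆ a} * #{c ∈ C | T.toRight ⊆ c} := by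
  rw [disjSumFamily, filter_map, card_map, ← card_product, ← filter_product]
  simp only [Function.comp_def, Function.Embedding.coeFn_mk, Function.uncurry, subset_disjSum]

variable [DecidableEq α] [DecidableEq β]

def layeredFamily (k : ℕ) (P : ℕ → Finset (Finset α)) (Q : ℕ → Finset (Finset β)) :
    Finset (Finset (α ⊕ β)) :=
  (range (k + 1)).biUnion fun l => disjSumFamily (P l) (Q (k - l))

theorem isDesign_layeredFamily {t k lam : ℕ} {X : Finset α} {Y : Finset β}
    {P : ℕ → Finset (Finset α)} {Q : ℕ → Finset (Finset β)} (f g : ℕ → ℕ → ℕ)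
    (hP : ∀ l ≤ k, ∀ a ∈ P l, a ⊆ X ∧ #a = l) (hQ : ∀ m ≤ k, ∀ c ∈ Q m, c ⊆ Y ∧ #c = m)
    (hf : ∀ l ≤ k, ∀ S ⊆ X, #S ≤ t → #{a ∈ P l | S ⊆ a} = f l #S)
    (hg : ∀ m ≤ k, ∀ S ⊆ Y, #S ≤ t → #{c ∈ Q m | S ⊆ c} = g m #S)
    (hsum : ∀ i ≤ t, ∑ l ∈ range (k + 1), f l i * g (k - l) (t - i) = lam) :
    IsDesign t k lam (X.disjSum Y) (layeredFamily k P Q) := by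
  have hmem : ∀ u ∈ layeredFamily k P Q, ∃ l ≤ k,
      (u.toLeft ⊆ X ∧ #u.toLeft = l) ∧ (u.toRight ⊆ Y ∧ #u.toRight = k - l) := by
    intro u hu
    obtain ⟨l, hl, hu⟩ := mem_biUnion.1 hu
    have hlk : l ≤ k := Nat.lt_succ_iff.1 (mem_range.1 hl)
    obtain ⟨hul, hur⟩ := mem_disjSumFamily.1 hu
    exact ⟨l, hlk, hP l hlk _ hul, hQ _ (Nat.sub_le k l) _ hur⟩
  refine ⟨fun u hu => ?_, fun T hT hTcard => ?_⟩
  · obtain ⟨l, hlk, ⟨hlX, hl⟩, ⟨hrY, hr⟩⟩ := hmem u hu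
    refine ⟨subset_disjSum.2 ⟨hlX, hrY⟩, ?_⟩
    rw [← card_toLeft_add_card_toRight, hl, hr]
    omega
  · have hdisj : (range (k + 1) : Set ℕ).PairwiseDisjoint
        fun l => disjSumFamily (P l) (Q (k - l)) := by
      intro l hl l' hl' hne
      refine disjoint_left.2 fun u hu hu' => hne ?_
      rw [coe_range, Set.mem_Iio, Nat.lt_succ_iff] at hl hl'
      rw [← (hP l hl _ (mem_disjSumFamily.1 hu).1).2, (hP l' hl' _ (mem_disjSumFamily.1 hu').1).2]
    obtain ⟨hTX, hTY⟩ := subset_disjSum.1 hT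
    have hTt : #T.toLeft + #T.toRight = t := by rw [card_toLeft_add_card_toRight, hTcard]
    rw [layeredFamily, filter_biUnion, card_biUnion (hdisj.mono fun l => filter_subset _ _),
      ← hsum #T.toLeft (by omega)]
    refine sum_congr rfl fun l hl => ?_
    have hlk : l ≤ k := Nat.lt_succ_iff.1 (mem_range.1 hl)
    rw [card_filter_superset_disjSumFamily, hf l hlk _ hTX (by omega),
      hg _ (Nat.sub_le k l) _ hTY (by omega), show t - #T.toLeft = #T.toRight by omega]

end DisjSum

section Layers

variable {α : Type*} [DecidableEq α]

def layer (t : ℕ) (X : Finset α) (D : ℕ → Finset (Finset α)) (m : ℕ) : Finset (Finset α) :=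
  if m ≤ t then X.powersetCard m else D m

def layerCount (v t : ℕ) (lam : ℕ → ℕ) (m s : ℕ) : ℕ :=
  if m ≤ t then (if s ≤ m then (v - s).choose (m - s) else 0)
  else lam m * (v - s).choose (t - s) / (m - s).choose (t - s)

variable {t k : ℕ} {lam : ℕ → ℕ} {X : Finset α} {D : ℕ → Finset (Finset α)}

theorem subset_and_card_of_mem_layer (hD : ∀ m, t < m → m ≤ k → IsDesign t m (lam m) X (D m))
    {m : ℕ} (hmk : m ≤ k) {a : Finset α} (ha : a ∈ layer t X D m) : a ⊆ X ∧ #a = m := by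
  unfold layer at ha
  split_ifs at ha with hmt
  · exact mem_powersetCard.1 ha
  · exact (hD m (by omega) hmk).1 a ha

theorem card_filter_superset_layer (hD : ∀ m, t < m → m ≤ k → IsDesign t m (lam m) X (D m))
    {m : ℕ} (hmk : m ≤ k) {S : Finset α} (hSX : S ⊆ X) (hSt : #S ≤ t) :
    #{a ∈ layer t X D m | S ⊆ a} = layerCount #X t lam m #S := by
  by_cases hmt : m ≤ t
  · rw [layer, layerCount, if_pos hmt, if_pos hmt]
    exact card_filter_powersetCard_superset hSX m
  · rw [layer, layerCount, if_neg hmt, if_neg hmt]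
    exact (Nat.div_eq_of_eq_mul_left (Nat.choose_pos (by omega))
      ((hD m (by omega) hmk).card_filter_superset_mul_choose hSX hSt).symm).symm

theorem isDesign_layeredFamily_layer (hD : ∀ m, t < m → m ≤ k → IsDesign t m (lam m) X (D m))
    {Λ : ℕ} (hsum : ∀ i ≤ t, ∑ l ∈ range (k + 1),
      layerCount #X t lam l i * layerCount #X t lam (k - l) (t - i) = Λ) :
    IsDesign t k Λ (X.disjSum X) (layeredFamily k (layer t X D) (layer t X D)) :=
  isDesign_layeredFamily _ _ (fun _ hm _ => subset_and_card_of_mem_layer hD hm)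
    (fun _ hm _ => subset_and_card_of_mem_layer hD hm)
    (fun _ hm _ => card_filter_superset_layer hD hm)
    (fun _ hm _ => card_filter_superset_layer hD hm) hsum

end Layers

def designLambda : ℕ → ℕ
  | 7 => 5
  | 8 => 40
  | 9 => 200
  | 10 => 700
  | 11 => 1820
  | 12 => 3640
  | 13 => 5720
  | _ => 0

theorem sum_layerCount_eq : ∀ i ≤ 6, ∑ l ∈ range 14,
    layerCount 23 6 designLambda l i * layerCount 23 6 designLambda (13 - l) (6 - i) = 5483400 := by
  decide

theorem designExists_6_46_13
    (h1 : SimpleDesignExists 6 23 7 5)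
    (h2 : SimpleDesignExists 6 23 8 40)
    (h3 : SimpleDesignExists 6 23 9 200)
    (h4 : SimpleDesignExists 6 23 10 700)
    (h5 : SimpleDesignExists 6 23 11 1820)
    (h6 : SimpleDesignExists 6 23 12 3640)
    (h7 : SimpleDesignExists 6 23 13 5720)
    : SimpleDesignExists 6 46 13 5483400 := by
  have transport {k lam : ℕ} (h : SimpleDesignExists 6 23 k lam) :
      ∃ D, IsDesign 6 k lam (range 23) D := by
    obtain ⟨X, B, hX, hB⟩ := simpleDesignExists_iff.1 h
    exact hB.exists_of_card_eq (by rw [hX, card_range])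
  have hD : ∀ m, 6 < m → m ≤ 13 → ∃ D, IsDesign 6 m (designLambda m) (range 23) D := by
    intro m h6m hm13
    interval_cases m
    exacts [transport h1, transport h2, transport h3, transport h4, transport h5, transport h6,
      transport h7]
  choose! D hD using hD
  have hB := isDesign_layeredFamily_layer hD (by simpa using sum_layerCount_eq)
  exact simpleDesignExists_iff.2 ⟨_, _, by simp, hB.map Equiv.natSumNatEquivNat.toEmbedding⟩
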